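/- arXiv:2411.19462 — 2 statements merged into one kernel-verified Lean document; each statement's English description precedes it below -/
import Mathlib

section
/- For all positive integers k, m and n_1, ..., n_m, the paintability of the complete multipartite graph K_{n_1,...,n_m} satisfies χ_P(K_{n_1,...,n_m}) > k if and only if Pusher has a winning strategy in the (k, n_1, ..., n_m) chip game. -/
/-- `PainterWinsIn G r fuel U t` : in the online list coloring game on `G` with threshold `r`,
where `U` is the set of currently unpainted vertices and `t v` is the number of times vertex `v`
has been presented so far, Painter can guarantee to win within `fuel` further rounds.
In each round Lister presents a nonempty set `S` of unpainted vertices; Painter chooses an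
independent subset `I ⊆ S` and paints it; Painter wins once all vertices are painted, and loses
if some unpainted vertex has been presented `r` times. -/
def PainterWinsIn {V : Type*} [Fintype V] [DecidableEq V] (G : SimpleGraph V) (r : ℕ) :
    ℕ → Finset V → (V → ℕ) → Prop
  | 0, U, _ => U = ∅
  | fuel + 1, U, t => U = ∅ ∨
      ∀ S ⊆ U, S.Nonempty →
        ∃ I ⊆ S, (∀ u ∈ I, ∀ v ∈ I, ¬ G.Adj u v) ∧
          (U \ I = ∅ ∨
            ((∀ v ∈ U \ I, t v + (if v ∈ S then 1 else 0) < r) ∧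
              PainterWinsIn G r fuel (U \ I) (fun v => t v + if v ∈ S then 1 else 0)))

/-- `G` is `r`-paintable: Painter has a winning strategy in the online list coloring game
on `G` with threshold `r`. -/
def Paintable {V : Type*} [Fintype V] [DecidableEq V] (G : SimpleGraph V) (r : ℕ) : Prop :=
  ∃ fuel, PainterWinsIn G r fuel Finset.univ (fun _ => 0)

/-- The paintability `χ_P(G)`: the least `r` such that `G` is `r`-paintable. -/
noncomputable def paintability {V : Type*} [Fintype V] [DecidableEq V] (G : SimpleGraph V) : ℕ :=
  sInf {r | Paintable G r}

/-- The board at the end of a round of the `(k, n 0, …, n (m-1))` chip game in which Pusher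
pushes the chip set `S` (each chip of `S` moves up one row) and Remover then removes all chips
of `S` lying in column `col`. Here `pos i j` is the row of the `j`-th chip of column `i`,
with `⊥` meaning the chip has been removed from the board. -/
def pushChips {m : ℕ} {n : Fin m → ℕ} (pos : (i : Fin m) → Fin (n i) → WithBot ℕ)
    (S : Finset ((i : Fin m) × Fin (n i))) (col : Fin m) :
    (i : Fin m) → Fin (n i) → WithBot ℕ :=
  fun i j =>
    if (⟨i, j⟩ : (i : Fin m) × Fin (n i)) ∈ S then
      (if i = col then ⊥ else (pos i j).map (· + 1))
    else pos i j

/-- `PusherWins k pos` : from the Pusher-to-move board `pos`, Pusher has a winning strategy in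
the chip game with winning threshold `k`: by repeatedly pushing a nonempty set of chips on the
board, Pusher can force that at the end of some round (after Remover removes the pushed chips
of one column of Remover's choice) a chip occupies row `k` (or above). -/
inductive PusherWins (k : ℕ) {m : ℕ} {n : Fin m → ℕ} :
    ((i : Fin m) → Fin (n i) → WithBot ℕ) → Prop
  | win (pos : (i : Fin m) → Fin (n i) → WithBot ℕ) (i : Fin m) (j : Fin (n i))
      (h : (k : WithBot ℕ) ≤ pos i j) : PusherWins k pos
  | step (pos : (i : Fin m) → Fin (n i) → WithBot ℕ) (S : Finset ((i : Fin m) × Fin (n i)))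
      (hne : S.Nonempty) (hon : ∀ c ∈ S, pos c.1 c.2 ≠ ⊥)
      (h : ∀ col : Fin m, PusherWins k (pushChips pos S col)) : PusherWins k pos

section Aux

lemma painter_mono {V : Type*} [Fintype V] [DecidableEq V] (G : SimpleGraph V) (r : ℕ) :
    ∀ fuel (U U' : Finset V) (t : V → ℕ), U' ⊆ U →
      PainterWinsIn G r fuel U t → PainterWinsIn G r fuel U' t := by
  intro fuel
  induction fuel with
  | zero =>
    intro U U' t hsub h
    simp only [PainterWinsIn] at h ⊢
    exact Finset.subset_empty.mp (h ▸ hsub)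
  | succ f ih =>
    intro U U' t hsub h
    simp only [PainterWinsIn] at h ⊢
    rcases h with h | h
    · left; exact Finset.subset_empty.mp (h ▸ hsub)
    · by_cases hU' : U' = ∅
      · left; exact hU'
      right
      intro S hS hSne
      obtain ⟨I, hIS, hind, hrest⟩ := h S (hS.trans hsub) hSne
      refine ⟨I, hIS, hind, ?_⟩
      have hsd : U' \ I ⊆ U \ I := Finset.sdiff_subset_sdiff hsub le_rfl
      rcases hrest with h0 | ⟨hb, hw⟩
      · left; exact Finset.subset_empty.mp (h0 ▸ hsd)
      · right
        exact ⟨fun v hv => hb v (hsd hv), ih _ _ _ hsd hw⟩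

lemma painter_mono_r {V : Type*} [Fintype V] [DecidableEq V] (G : SimpleGraph V) {r r' : ℕ}
    (hr : r ≤ r') :
    ∀ fuel (U : Finset V) (t : V → ℕ),
      PainterWinsIn G r fuel U t → PainterWinsIn G r' fuel U t := by
  intro fuel
  induction fuel with
  | zero => intro U t h; exact h
  | succ f ih =>
    intro U t h
    simp only [PainterWinsIn] at h ⊢
    rcases h with h | h
    · left; exact h
    right
    intro S hS hSne
    obtain ⟨I, hIS, hind, hrest⟩ := h S hS hSne
    refine ⟨I, hIS, hind, ?_⟩
    rcases hrest with h0 | ⟨hb, hw⟩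
    · left; exact h0
    · right; exact ⟨fun v hv => lt_of_lt_of_le (hb v hv) hr, ih _ _ hw⟩

end Aux
section Remover

variable {m : ℕ} {n : Fin m → ℕ}

/-- number of chips on the board -/
noncomputable def boardCard (pos : (i : Fin m) → Fin (n i) → WithBot ℕ) : ℕ :=
  (Finset.univ.filter (fun c : (i : Fin m) × Fin (n i) => pos c.1 c.2 ≠ ⊥)).card

lemma remover_bound (r : ℕ) :
    ∀ pos : (i : Fin m) → Fin (n i) → WithBot ℕ, PusherWins r pos →
      (∀ (c : (i : Fin m) × Fin (n i)) (p : ℕ), pos c.1 c.2 = (p : WithBot ℕ) →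
        p + boardCard pos ≤ r) →
      False := by
  intro pos hw
  induction hw with
  | win pos i j hle =>
    intro hinv
    have hne : pos i j ≠ ⊥ := by
      intro hb
      rw [hb] at hle
      exact (WithBot.not_coe_le_bot r) hle
    cases hpos : pos i j with
    | bot => exact hne hpos
    | coe p =>
      have h1 := hinv ⟨i, j⟩ p hpos
      have hrp : (r : ℕ) ≤ p := by
        rw [hpos] at hle
        rw [Nat.cast_withBot] at hle
        exact WithBot.coe_le_coe.mp hle
      have hmem : (⟨i, j⟩ : (i : Fin m) × Fin (n i)) ∈
          Finset.univ.filter (fun c : (i : Fin m) × Fin (n i) => pos c.1 c.2 ≠ ⊥) := by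
        simp [hne]
      have hcard : 1 ≤ boardCard pos := Finset.card_pos.mpr ⟨_, hmem⟩
      omega
  | step pos S hne hon h ih =>
    intro hinv
    obtain ⟨s, hs⟩ := hne
    set col := s.1 with hcol
    apply ih col
    intro c p hp
    -- facts about pushChips
    have hposs : pushChips pos S col s.1 s.2 = ⊥ := by
      simp [pushChips, hs, hcol]
    -- board after push is a subset of (board \ {s})
    have hsub : (Finset.univ.filter
        (fun c : (i : Fin m) × Fin (n i) => pushChips pos S col c.1 c.2 ≠ ⊥)) ⊆
        (Finset.univ.filter
        (fun c : (i : Fin m) × Fin (n i) => pos c.1 c.2 ≠ ⊥)).erase s := by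
      intro c hc
      simp only [Finset.mem_filter, Finset.mem_univ, true_and] at hc
      rw [Finset.mem_erase]
      constructor
      · rintro rfl; exact hc hposs
      · simp only [Finset.mem_filter, Finset.mem_univ, true_and]
        intro hb
        apply hc
        by_cases hcS : c ∈ S
        · by_cases hcc : c.1 = col
          · simp [pushChips, hcS, hcc]
          · simp [pushChips, hcS, hcc, hb]
        · simp [pushChips, hcS, hb]
    have hsmem : s ∈ (Finset.univ.filter
        (fun c : (i : Fin m) × Fin (n i) => pos c.1 c.2 ≠ ⊥)) := by
      simp [hon s hs]
    have hcard : boardCard (pushChips pos S col) + 1 ≤ boardCard pos := by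
      have h1 := Finset.card_le_card hsub
      have h2 : ((Finset.univ.filter
          (fun c : (i : Fin m) × Fin (n i) => pos c.1 c.2 ≠ ⊥)).erase s).card + 1
          = boardCard pos := Finset.card_erase_add_one hsmem
      unfold boardCard at h2 ⊢
      omega
    -- now case on how c moved
    by_cases hcS : c ∈ S
    · by_cases hcc : c.1 = col
      · exfalso
        have : pushChips pos S col c.1 c.2 = ⊥ := by simp [pushChips, hcS, hcc]
        rw [hp] at this
        exact WithBot.coe_ne_bot this
      · have hmap : pushChips pos S col c.1 c.2 = (pos c.1 c.2).map (· + 1) := by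
          simp [pushChips, hcS, hcc]
        rw [hp] at hmap
        cases hq : pos c.1 c.2 with
        | bot => rw [hq] at hmap; simp at hmap
        | coe q =>
          rw [hq, WithBot.map_coe] at hmap
          have hpq : p = q + 1 := by
            rw [Nat.cast_withBot] at hmap
            exact WithBot.coe_inj.mp hmap
          have := hinv c q hq
          omega
    · have hsame : pushChips pos S col c.1 c.2 = pos c.1 c.2 := by
        simp [pushChips, hcS]
      have := hinv c p (by rw [← hsame]; exact hp)
      omega

lemma not_pusherWins_card :
    ¬ PusherWins (Fintype.card ((i : Fin m) × Fin (n i)))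
      (fun (i : Fin m) (_ : Fin (n i)) => (0 : WithBot ℕ)) := by
  intro hw
  apply remover_bound _ _ hw
  intro c p hp
  have hp0 : p = 0 := by
    rw [Nat.cast_withBot] at hp
    exact (WithBot.coe_inj.mp hp.symm)
  subst hp0
  have : boardCard (fun (i : Fin m) (_ : Fin (n i)) => (0 : WithBot ℕ))
      ≤ Fintype.card ((i : Fin m) × Fin (n i)) := by
    unfold boardCard
    exact (Finset.card_filter_le _ _).trans (le_of_eq (Finset.card_univ))
  omega

end Remover
section LemA

variable {m : ℕ} {n : Fin m → ℕ}

lemma not_adj_fst {u v : (i : Fin m) × Fin (n i)}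
    (h : ¬ (SimpleGraph.completeMultipartiteGraph (fun i : Fin m => Fin (n i))).Adj u v) :
    u.1 = v.1 := by
  simpa [SimpleGraph.comap_adj, SimpleGraph.top_adj, not_not] using h

lemma pusher_not_painter (k : ℕ) :
    ∀ pos : (i : Fin m) → Fin (n i) → WithBot ℕ, PusherWins k pos →
      ∀ (N : ℕ) (U : Finset ((i : Fin m) × Fin (n i)))
        (t : ((i : Fin m) × Fin (n i)) → ℕ),
        (∀ v, v ∈ U ↔ pos v.1 v.2 ≠ ⊥) →
        (∀ v ∈ U, pos v.1 v.2 = (t v : WithBot ℕ)) →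
        (∀ v ∈ U, t v < k) →
        ¬ PainterWinsIn
            (SimpleGraph.completeMultipartiteGraph (fun i : Fin m => Fin (n i))) k N U t := by
  intro pos hw
  induction hw with
  | win pos i j hle =>
    intro N U t hiff hagree hbound _
    have hne : pos i j ≠ ⊥ := by
      intro hb; rw [hb] at hle; exact WithBot.not_coe_le_bot k hle
    have hmem : (⟨i, j⟩ : (i : Fin m) × Fin (n i)) ∈ U := (hiff ⟨i, j⟩).mpr hne
    have hagr := hagree _ hmem
    rw [hagr, Nat.cast_withBot, Nat.cast_withBot] at hle
    exact absurd (hbound _ hmem) (not_lt.mpr (WithBot.coe_le_coe.mp hle))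
  | step pos S hne hon h ih =>
    intro N U t hiff hagree hbound hP
    obtain ⟨s, hsS⟩ := hne
    have hSU : S ⊆ U := fun c hc => (hiff c).mpr (hon c hc)
    have hsU : s ∈ U := hSU hsS
    match N, hP with
    | 0, hP =>
      simp only [PainterWinsIn] at hP
      exact absurd (hP ▸ hsU) (Finset.notMem_empty s)
    | (f+1), hP =>
      simp only [PainterWinsIn] at hP
      rcases hP with hP | hP
      · exact absurd (hP ▸ hsU) (Finset.notMem_empty s)
      obtain ⟨I, hIS, hind, hrest⟩ := hP S hSU ⟨s, hsS⟩
      rcases hrest with h0 | ⟨hb, hw'⟩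
      · -- U = I : everything gets painted / removed
        have hUI : U ⊆ I := by
          intro u hu
          by_contra hu'
          exact absurd (Finset.mem_sdiff.mpr ⟨hu, hu'⟩) (by rw [h0]; exact Finset.notMem_empty u)
        have hsI : s ∈ I := hUI hsU
        have hIcol : ∀ u ∈ I, u.1 = s.1 := fun u hu => not_adj_fst (hind u hu s hsI)
        refine ih s.1 0 ∅ (fun v => t v + if v ∈ S then 1 else 0) ?_
          (fun v hv => absurd hv (Finset.notMem_empty v))
          (fun v hv => absurd hv (Finset.notMem_empty v)) ?_
        · intro v
          simp only [Finset.notMem_empty, false_iff, ne_eq, not_not]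
          by_cases hvS : v ∈ S
          · have hvc : v.1 = s.1 := hIcol v (hUI (hSU hvS))
            simpa [pushChips, hvc] using (by simp [pushChips, hvS, hvc] :
              pushChips pos S s.1 v.1 v.2 = ⊥)
          · have hvU : v ∉ U := fun hvU => hvS (hIS (hUI hvU))
            have : pos v.1 v.2 = ⊥ := by
              by_contra hbb; exact hvU ((hiff v).mpr hbb)
            simpa [pushChips, hvS] using this
        · simp [PainterWinsIn]
      · -- general case
        have hIcol : ∃ col : Fin m, ∀ u ∈ I, u.1 = col := by
          by_cases hI : I.Nonempty
          · obtain ⟨i0, hi0⟩ := hI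
            exact ⟨i0.1, fun u hu => not_adj_fst (hind u hu i0 hi0)⟩
          · exact ⟨s.1, fun u hu => absurd ⟨u, hu⟩ hI⟩
        obtain ⟨col, hcolI⟩ := hIcol
        set t' : ((i : Fin m) × Fin (n i)) → ℕ :=
          fun v => t v + if v ∈ S then 1 else 0 with ht'
        set U' := U \ S.filter (fun c => c.1 = col) with hU'def
        have hU'sub : U' ⊆ U \ I :=
          Finset.sdiff_subset_sdiff le_rfl
            (fun u hu => Finset.mem_filter.mpr ⟨hIS hu, hcolI u hu⟩)
        have hP' : PainterWinsIn
            (SimpleGraph.completeMultipartiteGraph (fun i : Fin m => Fin (n i))) k f U' t' :=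
          painter_mono _ _ _ _ _ _ hU'sub hw'
        refine ih col f U' t' ?_ ?_ (fun v hv => hb v (hU'sub hv)) hP'
        · intro v
          constructor
          · intro hv
            rw [hU'def, Finset.mem_sdiff, Finset.mem_filter] at hv
            obtain ⟨hvU, hvnot⟩ := hv
            by_cases hvS : v ∈ S
            · have hvc : v.1 ≠ col := fun hc => hvnot ⟨hvS, hc⟩
              have : pushChips pos S col v.1 v.2 = ((t v : ℕ) : WithBot ℕ).map (· + 1) := by
                rw [← hagree v hvU]; simp [pushChips, hvS, hvc]
              rw [this, Nat.cast_withBot, WithBot.map_coe]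
              exact WithBot.coe_ne_bot
            · have : pushChips pos S col v.1 v.2 = pos v.1 v.2 := by
                simp [pushChips, hvS]
              rw [this]
              exact (hiff v).mp hvU
          · intro hv
            rw [hU'def, Finset.mem_sdiff, Finset.mem_filter]
            by_cases hvS : v ∈ S
            · by_cases hvc : v.1 = col
              · exfalso
                apply hv
                simp [pushChips, hvS, hvc]
              · exact ⟨hSU hvS, fun hx => hvc hx.2⟩
            · have : pushChips pos S col v.1 v.2 = pos v.1 v.2 := by
                simp [pushChips, hvS]
              rw [this] at hv
              exact ⟨(hiff v).mpr hv, fun hx => hvS hx.1⟩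
        · intro v hv
          rw [hU'def, Finset.mem_sdiff, Finset.mem_filter] at hv
          obtain ⟨hvU, hvnot⟩ := hv
          by_cases hvS : v ∈ S
          · have hvc : v.1 ≠ col := fun hc => hvnot ⟨hvS, hc⟩
            have : pushChips pos S col v.1 v.2 = ((t v : ℕ) : WithBot ℕ).map (· + 1) := by
              rw [← hagree v hvU]; simp [pushChips, hvS, hvc]
            rw [this, Nat.cast_withBot, WithBot.map_coe, ht']
            simp [hvS, Nat.cast_withBot]
          · have : pushChips pos S col v.1 v.2 = pos v.1 v.2 := by
              simp [pushChips, hvS]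
            rw [this, hagree v hvU, ht']
            simp [hvS]

end LemA
section LemB

variable {m : ℕ} {n : Fin m → ℕ}

lemma painter_of_not_pusher (r : ℕ) :
    ∀ (N : ℕ) (U : Finset ((i : Fin m) × Fin (n i)))
      (t : ((i : Fin m) × Fin (n i)) → ℕ)
      (pos : (i : Fin m) → Fin (n i) → WithBot ℕ),
      (∑ v ∈ U, (r - t v)) ≤ N →
      (∀ v, v ∈ U ↔ pos v.1 v.2 ≠ ⊥) →
      (∀ v ∈ U, pos v.1 v.2 = (t v : WithBot ℕ)) →
      (∀ v ∈ U, t v < r) →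
      ¬ PusherWins r pos →
      PainterWinsIn
        (SimpleGraph.completeMultipartiteGraph (fun i : Fin m => Fin (n i))) r N U t := by
  intro N
  induction N with
  | zero =>
    intro U t pos hsum hiff hagree hbound hnp
    simp only [PainterWinsIn]
    by_contra hU
    obtain ⟨v, hv⟩ := Finset.nonempty_iff_ne_empty.mpr hU
    have h1 : 1 ≤ r - t v := by have := hbound v hv; omega
    have : 1 ≤ ∑ v ∈ U, (r - t v) := le_trans h1 (Finset.single_le_sum (f := fun v => r - t v) (fun _ _ => Nat.zero_le _) hv)
    omega
  | succ f ih =>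
    intro U t pos hsum hiff hagree hbound hnp
    simp only [PainterWinsIn]
    by_cases hU : U = ∅
    · left; exact hU
    right
    intro S hSU hSne
    -- S is a legal pusher move
    have hon : ∀ c ∈ S, pos c.1 c.2 ≠ ⊥ := fun c hc => (hiff c).mp (hSU hc)
    have hcol : ∃ col : Fin m, ¬ PusherWins r (pushChips pos S col) := by
      by_contra hall
      push_neg at hall
      exact hnp (PusherWins.step pos S hSne hon hall)
    obtain ⟨col, hcolnp⟩ := hcol
    refine ⟨S.filter (fun c => c.1 = col), Finset.filter_subset _ _, ?_, ?_⟩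
    · intro u hu v hv hadj
      rw [Finset.mem_filter] at hu hv
      have : u.1 ≠ v.1 := by
        simpa [SimpleGraph.comap_adj, SimpleGraph.top_adj] using hadj
      exact this (hu.2.trans hv.2.symm)
    set I := S.filter (fun c => c.1 = col) with hI
    set t' : ((i : Fin m) × Fin (n i)) → ℕ :=
      fun v => t v + if v ∈ S then 1 else 0 with ht'
    by_cases hUI : U \ I = ∅
    · left; exact hUI
    right
    -- no chip is at row ≥ r after the push
    have hnowin : ∀ (c : (i : Fin m) × Fin (n i)),
        ¬ ((r : WithBot ℕ) ≤ pushChips pos S col c.1 c.2) := by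
      intro c hle
      exact hcolnp (PusherWins.win _ c.1 c.2 hle)
    -- position of surviving chips
    have hpos' : ∀ v ∈ U \ I, pushChips pos S col v.1 v.2 = (t' v : WithBot ℕ) := by
      intro v hv
      rw [Finset.mem_sdiff, hI, Finset.mem_filter] at hv
      obtain ⟨hvU, hvnot⟩ := hv
      by_cases hvS : v ∈ S
      · have hvc : v.1 ≠ col := fun hc => hvnot ⟨hvS, hc⟩
        have : pushChips pos S col v.1 v.2 = ((t v : ℕ) : WithBot ℕ).map (· + 1) := by
          rw [← hagree v hvU]; simp [pushChips, hvS, hvc]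
        rw [this, Nat.cast_withBot, WithBot.map_coe, ht']
        simp [hvS, Nat.cast_withBot]
      · have : pushChips pos S col v.1 v.2 = pos v.1 v.2 := by
          simp [pushChips, hvS]
        rw [this, hagree v hvU, ht']
        simp [hvS]
    have hbound' : ∀ v ∈ U \ I, t' v < r := by
      intro v hv
      have h1 := hnowin v
      rw [hpos' v hv, Nat.cast_withBot, Nat.cast_withBot] at h1
      by_contra hc
      exact h1 (WithBot.coe_le_coe.mpr (not_lt.mp hc))
    constructor
    · intro v hv
      have := hbound' v hv
      rw [ht'] at this
      exact this
    · -- recursive call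
      have hiff' : ∀ v, v ∈ U \ I ↔ pushChips pos S col v.1 v.2 ≠ ⊥ := by
        intro v
        constructor
        · intro hv
          rw [hpos' v hv, Nat.cast_withBot]
          exact WithBot.coe_ne_bot
        · intro hv
          rw [Finset.mem_sdiff, hI, Finset.mem_filter]
          by_cases hvS : v ∈ S
          · by_cases hvc : v.1 = col
            · exfalso; apply hv; simp [pushChips, hvS, hvc]
            · exact ⟨hSU hvS, fun hx => hvc hx.2⟩
          · have : pushChips pos S col v.1 v.2 = pos v.1 v.2 := by
              simp [pushChips, hvS]
            rw [this] at hv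
            exact ⟨(hiff v).mpr hv, fun hx => hvS hx.1⟩
      -- measure decreases
      have hsum' : (∑ v ∈ U \ I, (r - t' v)) ≤ f := by
        obtain ⟨s, hsS⟩ := hSne
        have hsplit : (∑ v ∈ U \ I, (r - t v)) + (∑ v ∈ I, (r - t v))
            = ∑ v ∈ U, (r - t v) :=
          Finset.sum_sdiff ((Finset.filter_subset _ _).trans hSU)
        by_cases hsI : s ∈ I
        · -- the painted part contributes at least 1
          have h1 : 1 ≤ r - t s := by have := hbound s (hSU hsS); omega
          have h2 : r - t s ≤ ∑ v ∈ I, (r - t v) :=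
            Finset.single_le_sum (f := fun v => r - t v) (fun _ _ => Nat.zero_le _) hsI
          have h3 : (∑ v ∈ U \ I, (r - t' v)) ≤ ∑ v ∈ U \ I, (r - t v) :=
            Finset.sum_le_sum (fun v _ => by rw [ht']; simp only; omega)
          omega
        · -- s survives and its deficiency drops
          have hsUI : s ∈ U \ I := Finset.mem_sdiff.mpr ⟨hSU hsS, hsI⟩
          have hlt : (∑ v ∈ U \ I, (r - t' v)) < ∑ v ∈ U \ I, (r - t v) := by
            apply Finset.sum_lt_sum
            · intro v _; rw [ht']; simp only; omega
            · refine ⟨s, hsUI, ?_⟩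
              rw [ht']
              simp only [hsS, if_pos]
              have := hbound s (hSU hsS)
              omega
          have h3 : (∑ v ∈ U \ I, (r - t v)) ≤ ∑ v ∈ U, (r - t v) := by omega
          omega
      exact ih (U \ I) t' (pushChips pos S col) hsum' hiff' hpos' hbound' hcolnp

end LemB

/-- For all positive integers `k`, `m` and `n 0, …, n (m-1)`, the paintability
of the complete multipartite graph `K_{n 0, …, n (m-1)}` exceeds `k` if and only if Pusher has a
winning strategy in the `(k, n 0, …, n (m-1))` chip game (started with all chips in row `0`). -/
theorem paintability_gt_iff_pusherWins (k m : ℕ) (hk : 0 < k) (hm : 0 < m)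
    (n : Fin m → ℕ) (hn : ∀ i, 0 < n i) :
    k < paintability (SimpleGraph.completeMultipartiteGraph (fun i : Fin m => Fin (n i))) ↔
      PusherWins k (fun (i : Fin m) (_ : Fin (n i)) => (0 : WithBot ℕ)) := by
  have hzero_iff : ∀ v : (i : Fin m) × Fin (n i),
      v ∈ (Finset.univ : Finset ((i : Fin m) × Fin (n i))) ↔
        (fun (i : Fin m) (_ : Fin (n i)) => (0 : WithBot ℕ)) v.1 v.2 ≠ ⊥ := by
    intro v
    simp
  have hzero_agree : ∀ v ∈ (Finset.univ : Finset ((i : Fin m) × Fin (n i))),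
      (fun (i : Fin m) (_ : Fin (n i)) => (0 : WithBot ℕ)) v.1 v.2
        = (((fun _ : (i : Fin m) × Fin (n i) => 0) v : ℕ) : WithBot ℕ) := by
    intro v _
    norm_cast
  constructor
  · intro hlt
    by_contra hpw
    have hpaint : Paintable
        (SimpleGraph.completeMultipartiteGraph (fun i : Fin m => Fin (n i))) k :=
      ⟨∑ v ∈ Finset.univ, (k - (fun _ : (i : Fin m) × Fin (n i) => 0) v),
        painter_of_not_pusher k _ _ _ _ le_rfl hzero_iff hzero_agree (fun _ _ => hk) hpw⟩
    exact absurd (Nat.sInf_le hpaint) (not_le.mpr hlt)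
  · intro hpw
    have hnot : ¬ Paintable
        (SimpleGraph.completeMultipartiteGraph (fun i : Fin m => Fin (n i))) k := by
      rintro ⟨fuel, hf⟩
      exact pusher_not_painter k _ hpw fuel Finset.univ (fun _ => 0)
        hzero_iff hzero_agree (fun _ _ => hk) hf
    have hCpos : 0 < Fintype.card ((i : Fin m) × Fin (n i)) :=
      Fintype.card_pos_iff.mpr ⟨⟨⟨0, hm⟩, ⟨0, hn _⟩⟩⟩
    have hC : Paintable
        (SimpleGraph.completeMultipartiteGraph (fun i : Fin m => Fin (n i)))
        (Fintype.card ((i : Fin m) × Fin (n i))) :=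
      ⟨_, painter_of_not_pusher _ _ _ _ _ le_rfl hzero_iff hzero_agree
        (fun _ _ => hCpos) not_pusherWins_card⟩
    by_contra hle
    push_neg at hle
    have hmem := Nat.sInf_mem
      (⟨_, hC⟩ : {r | Paintable
        (SimpleGraph.completeMultipartiteGraph (fun i : Fin m => Fin (n i))) r}.Nonempty)
    obtain ⟨fuel, hf⟩ := hmem
    exact hnot ⟨fuel, painter_mono_r _ hle fuel _ _ hf⟩
end

section
/- Let m ≥ 2 be an integer and define f : ℕ → ℕ by f(0) = 1 and f(r) = f(r-1) + ⌈f(r-1)/(m-1)⌉ for r ≥ 1. Then for every integer k ≥ 0, f(k) ≤ Σ_{j=0}^{k} (m/(m-1))^j = ((m/(m-1))^{k+1} − 1)/((m/(m-1)) − 1) < m·(m/(m-1))^k. -/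
/-- Let `m ≥ 2` and define `f : ℕ → ℕ` by `f 0 = 1` and
`f r = f (r-1) + ⌈f (r-1) / (m-1)⌉` for `r ≥ 1`. Then for every `k ≥ 0`,
`f k ≤ ∑_{j=0}^{k} (m/(m-1))^j = ((m/(m-1))^{k+1} - 1)/((m/(m-1)) - 1) < m·(m/(m-1))^k`. -/
theorem brick_size_bound (m : ℕ) (hm : 2 ≤ m) (f : ℕ → ℕ) (hf0 : f 0 = 1)
    (hf : ∀ r : ℕ, (f (r + 1) : ℤ) = f r + ⌈(f r : ℚ) / ((m : ℚ) - 1)⌉) (k : ℕ) :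
    (f k : ℚ) ≤ ∑ j ∈ Finset.range (k + 1), ((m : ℚ) / ((m : ℚ) - 1)) ^ j ∧
    ∑ j ∈ Finset.range (k + 1), ((m : ℚ) / ((m : ℚ) - 1)) ^ j =
      (((m : ℚ) / ((m : ℚ) - 1)) ^ (k + 1) - 1) / (((m : ℚ) / ((m : ℚ) - 1)) - 1) ∧
    ∑ j ∈ Finset.range (k + 1), ((m : ℚ) / ((m : ℚ) - 1)) ^ j <
      (m : ℚ) * ((m : ℚ) / ((m : ℚ) - 1)) ^ k := by
  have hm2 : (2 : ℚ) ≤ (m : ℚ) := by exact_mod_cast hm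
  have hb : (0 : ℚ) < (m : ℚ) - 1 := by linarith
  set q : ℚ := (m : ℚ) / ((m : ℚ) - 1) with hq
  have hq1 : (1 : ℚ) < q := by
    rw [hq, lt_div_iff₀ hb]; linarith
  have hqne : q ≠ 1 := ne_of_gt hq1
  have hqsub : 0 < q - 1 := by linarith
  -- geometric sum formula
  have hgeom : ∀ n : ℕ, ∑ j ∈ Finset.range n, q ^ j = (q ^ n - 1) / (q - 1) := by
    intro n
    rw [geom_sum_eq hqne]
  refine ⟨?_, hgeom (k + 1), ?_⟩
  · -- main induction
    induction k with
    | zero => simp [hf0]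
    | succ k ih =>
        have hrec := hf k
        have hceil : (⌈(f k : ℚ) / ((m : ℚ) - 1)⌉ : ℚ)
            ≤ (f k : ℚ) / ((m : ℚ) - 1) + ((m : ℚ) - 2) / ((m : ℚ) - 1) := by
          have h1 : (⌈(f k : ℚ) / ((m : ℚ) - 1)⌉ : ℚ) < (f k : ℚ) / ((m : ℚ) - 1) + 1 :=
            Int.ceil_lt_add_one _
          have h2 : (⌈(f k : ℚ) / ((m : ℚ) - 1)⌉ : ℚ) * ((m : ℚ) - 1) < (f k : ℚ) + ((m : ℚ) - 1) := by
            have := mul_lt_mul_of_pos_right h1 hb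
            calc (⌈(f k : ℚ) / ((m : ℚ) - 1)⌉ : ℚ) * ((m : ℚ) - 1)
                < ((f k : ℚ) / ((m : ℚ) - 1) + 1) * ((m : ℚ) - 1) := this
              _ = (f k : ℚ) + ((m : ℚ) - 1) := by field_simp
          -- integrality: both sides are integers
          set c : ℤ := ⌈(f k : ℚ) / ((m : ℚ) - 1)⌉
          have h3 : (c * ((m : ℤ) - 1) : ℤ) < (f k : ℤ) + ((m : ℤ) - 1) := by
            exact_mod_cast (by push_cast; exact h2 : ((c * ((m:ℤ)-1) : ℤ) : ℚ) < (((f k : ℤ) + ((m:ℤ)-1) : ℤ) : ℚ))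
          have h4 : (c * ((m : ℤ) - 1) : ℤ) ≤ (f k : ℤ) + ((m : ℤ) - 2) := by omega
          have h5 : (c : ℚ) * ((m : ℚ) - 1) ≤ (f k : ℚ) + ((m : ℚ) - 2) := by exact_mod_cast h4
          rw [← add_div, le_div_iff₀ hb]
          linarith
        have hfk : (f (k + 1) : ℚ) ≤ q * (f k : ℚ) + ((m : ℚ) - 2) / ((m : ℚ) - 1) := by
          have : (f (k + 1) : ℚ) = (f k : ℚ) + (⌈(f k : ℚ) / ((m : ℚ) - 1)⌉ : ℚ) := by
            exact_mod_cast congrArg (Int.cast : ℤ → ℚ) hrec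
          rw [this, hq]
          have : (f k : ℚ) + (f k : ℚ) / ((m : ℚ) - 1) = (m : ℚ) / ((m : ℚ) - 1) * (f k : ℚ) := by
            field_simp; ring
          linarith
        have hsum : ∑ j ∈ Finset.range (k + 1 + 1), q ^ j
            = q * ∑ j ∈ Finset.range (k + 1), q ^ j + 1 := geom_sum_succ
        have hfrac : ((m : ℚ) - 2) / ((m : ℚ) - 1) ≤ 1 := by
          rw [div_le_one hb]; linarith
        have hmul : q * (f k : ℚ) ≤ q * ∑ j ∈ Finset.range (k + 1), q ^ j :=
          mul_le_mul_of_nonneg_left ih (by linarith)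
        rw [hsum]; linarith
  · -- strict inequality
    rw [hgeom (k + 1)]
    have hme : q / (q - 1) = (m : ℚ) := by
      rw [hq]; field_simp; ring
    have h1 : (q ^ (k + 1) - 1) / (q - 1) < q ^ (k + 1) / (q - 1) :=
      (div_lt_div_iff_of_pos_right hqsub).mpr (by linarith)
    have h2 : q ^ (k + 1) / (q - 1) = (m : ℚ) * q ^ k := by
      rw [pow_succ, mul_div_assoc, hme]; ring
    linarith
end
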